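/- Let (V_t)_{t∈[0,τ]} be a BMO process. Then ρ(V) is subadditive: ρ_{s,t}(V) ≤ ρ_{s,u}(V) + ρ_{u,t}(V) whenever 0 ≤ s ≤ u ≤ t ≤ τ. Moreover, if V is VMO (κ_{0,τ}(V) = 0), then the map (s,t) ↦ ρ_{s,t}(V) is continuous on {(s,t) ∈ [0,τ]² : s ≤ t}. -/

import Mathlib

open MeasureTheory ProbabilityTheory Filter Topology Set
open scoped ENNReal NNReal

noncomputable section

/-- Left limit of the path `t ↦ V t ω` at time `s`, with the convention `V_{0-} := V_0`. -/
def llim {Ω : Type*} (V : ℝ → Ω → ℝ) (s : ℝ) (ω : Ω) : ℝ :=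
  if s ≤ 0 then V 0 ω else limUnder (nhdsWithin s (Set.Iio s)) fun t => V t ω

/-- A right-continuous adapted-in-time path structure: right continuous with left limits (RCLL). -/
structure IsRCLL {Ω : Type*} (V : ℝ → Ω → ℝ) : Prop where
  rightCont : ∀ ω t, ContinuousWithinAt (fun u => V u ω) (Set.Ici t) t
  leftLimExists : ∀ ω t, (0:ℝ) < t →
    ∃ l : ℝ, Filter.Tendsto (fun u => V u ω) (nhdsWithin t (Set.Iio t)) (nhds l)

/-- The conditional expectation `E[f | m']` of a (nonnegative) function `f`, realized as an
`ℝ≥0∞`-valued integral against the conditional expectation kernel; this gives an honest meaning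
to `E_{m'} f` even when `f` is not integrable. -/
def condE {Ω : Type*} {mΩ : MeasurableSpace Ω} [StandardBorelSpace Ω]
    (μ : Measure Ω) [IsFiniteMeasure μ] (m' : MeasurableSpace Ω) (f : Ω → ℝ) (ω : Ω) : ℝ≥0∞ :=
  ∫⁻ y, ENNReal.ofReal (f y) ∂(condExpKernel (mΩ := mΩ) μ m' ω)

/-- The modulus of mean oscillation `ρ_{s,t}(V)`: the supremum over all pairs of stopping times
`s ≤ S ≤ T ≤ t` of `‖E_S |V_T - V_{S-}|‖_∞`. -/
def bmoRho {Ω : Type*} {mΩ : MeasurableSpace Ω} [StandardBorelSpace Ω]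
    (μ : Measure Ω) [IsFiniteMeasure μ] (ℱ : Filtration ℝ mΩ) (V : ℝ → Ω → ℝ)
    (s t : ℝ) : ℝ≥0∞ :=
  ⨆ (S : Ω → ℝ) (T : Ω → ℝ) (hS : IsStoppingTime ℱ (fun ω => (S ω : WithTop ℝ)))
      (_ : IsStoppingTime ℱ (fun ω => (T ω : WithTop ℝ)))
    (_ : ∀ ω, s ≤ S ω) (_ : ∀ ω, S ω ≤ T ω) (_ : ∀ ω, T ω ≤ t),
    essSup (condE μ hS.measurableSpace fun y => |V (T y) y - llim V (S y) y|) μ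

/-- `κ_{s,t}(V) = lim_{h ↓ 0} sup { ρ_{u,v}(V) : s ≤ u ≤ v ≤ t, v - u ≤ h }`. -/
def bmoKappa {Ω : Type*} {mΩ : MeasurableSpace Ω} [StandardBorelSpace Ω]
    (μ : Measure Ω) [IsFiniteMeasure μ] (ℱ : Filtration ℝ mΩ) (V : ℝ → Ω → ℝ)
    (s t : ℝ) : ℝ≥0∞ :=
  ⨅ (h : ℝ) (_ : 0 < h),
    ⨆ (u : ℝ) (v : ℝ) (_ : s ≤ u) (_ : u ≤ v) (_ : v ≤ t) (_ : v - u ≤ h),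
      bmoRho μ ℱ V u v

/-- A process of bounded mean oscillation (BMO) on `[0, τ]`. -/
structure IsBMO {Ω : Type*} {mΩ : MeasurableSpace Ω} [StandardBorelSpace Ω]
    (μ : Measure Ω) [IsFiniteMeasure μ] (ℱ : Filtration ℝ mΩ) (τ : ℝ)
    (V : ℝ → Ω → ℝ) : Prop where
  adapted : Adapted ℱ V
  rcll : IsRCLL V
  finite : bmoRho μ ℱ V 0 τ < ⊤

/-- A process of vanishing mean oscillation (VMO) on `[0, τ]`. -/
structure IsVMO {Ω : Type*} {mΩ : MeasurableSpace Ω} [StandardBorelSpace Ω]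
    (μ : Measure Ω) [IsFiniteMeasure μ] (ℱ : Filtration ℝ mΩ) (τ : ℝ)
    (V : ℝ → Ω → ℝ) : Prop where
  bmo : IsBMO μ ℱ τ V
  vanishing : bmoKappa μ ℱ V 0 τ = 0

/-- `w_{s,t}(V) = ([V]_{vmo^{p\text{-}var};[s,t]})^p`, the supremum over all partitions
`s = π_0 ≤ π_1 ≤ ⋯ ≤ π_n = t` of `∑_i ρ_{π_i, π_{i+1}}(V)^p`. -/
def pvarW {Ω : Type*} {mΩ : MeasurableSpace Ω} [StandardBorelSpace Ω]
    (μ : Measure Ω) [IsFiniteMeasure μ] (ℱ : Filtration ℝ mΩ) (V : ℝ → Ω → ℝ)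
    (p : ℝ) (s t : ℝ) : ℝ≥0∞ :=
  ⨆ (n : ℕ) (π : Fin (n + 1) → ℝ) (_ : Monotone π) (_ : π 0 = s) (_ : π (Fin.last n) = t),
    ∑ i : Fin n, bmoRho μ ℱ V (π i.castSucc) (π i.succ) ^ p

/-- A VMO process with modulus of mean oscillation of finite `p`-variation, i.e. `vmo^{p-var}`. -/
structure IsVMOpVar {Ω : Type*} {mΩ : MeasurableSpace Ω} [StandardBorelSpace Ω]
    (μ : Measure Ω) [IsFiniteMeasure μ] (ℱ : Filtration ℝ mΩ) (τ : ℝ) (p : ℝ)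
    (V : ℝ → Ω → ℝ) : Prop where
  vmo : IsVMO μ ℱ τ V
  finiteVar : pvarW μ ℱ V p 0 τ < ⊤

/-- The `vmo^α` seminorm `[V]_{vmo^α;[0,τ]} = sup_{0 ≤ s < t ≤ τ} ρ_{s,t}(V) / (t-s)^α`. -/
def vmoAlphaNorm {Ω : Type*} {mΩ : MeasurableSpace Ω} [StandardBorelSpace Ω]
    (μ : Measure Ω) [IsFiniteMeasure μ] (ℱ : Filtration ℝ mΩ) (τ : ℝ) (α : ℝ)
    (V : ℝ → Ω → ℝ) : ℝ≥0∞ :=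
  ⨆ (s : ℝ) (t : ℝ) (_ : 0 ≤ s) (_ : s < t) (_ : t ≤ τ),
    bmoRho μ ℱ V s t / ENNReal.ofReal ((t - s) ^ α)

/-!
Subadditivity. Fix stopping times `s ≤ S ≤ T ≤ t` and `s < u ≤ t`, and split `|V_T - V_{S-}|`
at `u`. After `u` it is the integrand of the pair `(S ∨ u, T ∨ u)`; since `F_S ⊆ F_{S ∨ u}`, the
tower property bounds its `F_S`-conditional expectation by `ρ_{u,t}`. Before `u` it is the limit
of the integrands of the pairs `(S ∧ c, T ∧ c)` as `c ↑ u`, taken on `{S ≤ c}` where `F_S` and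
`F_{S ∧ c}` agree; conditional Fatou then gives the bound `ρ_{s,u}`. The approximation from below
is forced by the left limit `V_{u-}` that appears when `S < u ≤ T`.

Continuity. For `(s', t')` close to `(s, t)` put `[a, b] = [s, t] ∩ [s', t']`; subadditivity and
monotonicity give `ρ_{s',t'} ≤ ρ_{s',a} + ρ_{s,t} + ρ_{b,t'}`, and the two outer intervals are
short, so their moduli are small when `κ_{0,τ}(V) = 0`. By symmetry the same holds with the roles
of the two pairs exchanged.
-/

section CondLExp

variable {Ω : Type*} {m m₂ mΩ : MeasurableSpace Ω} {μ : Measure Ω} [IsFiniteMeasure μ]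

theorem condLExp_condLExp_of_le (hm₁₂ : m ≤ m₂) (hm₂ : m₂ ≤ mΩ) (F : Ω → ℝ≥0∞) :
    μ⁻[μ⁻[F|m₂]|m] =ᵐ[μ] μ⁻[F|m] :=
  ae_eq_condLExp (hm₁₂.trans hm₂) μ F (measurable_condLExp _ _ _) fun s hs => by
    rw [setLIntegral_condLExp (hm₁₂.trans hm₂) _ _ hs, setLIntegral_condLExp hm₂ _ _ (hm₁₂ s hs)]

theorem indicator_condLExp_ae_eq_condLExp_indicator (hm : m ≤ mΩ) (hm₂ : m₂ ≤ mΩ) {s : Set Ω}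
    (hs_m : MeasurableSet[m] s) (hs : ∀ t, MeasurableSet[m] (s ∩ t) ↔ MeasurableSet[m₂] (s ∩ t))
    (F : Ω → ℝ≥0∞) :
    s.indicator μ⁻[F|m₂] =ᵐ[μ] μ⁻[s.indicator F|m] := by
  have hs_m₂ : MeasurableSet[m₂] s := by simpa using (hs univ).1 (by simpa using hs_m)
  refine ae_eq_condLExp hm μ _ ?_ fun t ht => ?_
  · exact (((measurable_condLExp m₂ μ F).stronglyMeasurable.indicator hs_m₂
      ).stronglyMeasurable_of_measurableSpace_le_on hs_m₂ (fun t => (hs t).2)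
      fun x hx => indicator_of_notMem hx _).measurable
  · have hst : MeasurableSet[m₂] (s ∩ t) := (hs t).1 (hs_m.inter ht)
    rw [setLIntegral_indicator (hm₂ s hs_m₂), setLIntegral_indicator (hm₂ s hs_m₂),
      setLIntegral_condLExp hm₂ _ _ hst]

theorem setLIntegral_lintegral_condExpKernel [StandardBorelSpace Ω] (hm : m ≤ mΩ)
    {F : Ω → ℝ≥0∞} (hF : Measurable F) {s : Set Ω} (hs : MeasurableSet[m] s) :
    ∫⁻ ω in s, ∫⁻ y, F y ∂condExpKernel μ m ω ∂μ = ∫⁻ ω in s, F ω ∂μ := by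
  have hf : Measurable[m.prod mΩ] fun p : Ω × Ω => s.indicator (fun _ => F p.2) p.1 :=
    (hF.comp measurable_snd).indicator (measurable_fst hs)
  have hdiag : Measurable[mΩ, m.prod mΩ] (Function.diag : Ω → Ω × Ω) :=
    (measurable_id.mono le_rfl hm).prodMk measurable_id
  calc ∫⁻ ω in s, ∫⁻ y, F y ∂condExpKernel μ m ω ∂μ
      = ∫⁻ ω, s.indicator (fun ω => ∫⁻ y, F y ∂condExpKernel μ m ω) ω ∂μ.trim hm := by
        rw [lintegral_indicator hs, setLIntegral_trim hm (hF.lintegral_kernel) hs]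
    _ = ∫⁻ p, s.indicator (fun _ => F p.2) p.1 ∂((μ.trim hm) ⊗ₘ condExpKernel μ m) := by
        rw [Measure.lintegral_compProd hf]
        congr 1 with ω
        by_cases hω : ω ∈ s <;> simp [hω]
    _ = ∫⁻ ω in s, F ω ∂μ := by
        rw [compProd_trim_condExpKernel hm, ← lintegral_indicator (hm s hs)]
        exact @lintegral_map Ω (Ω × Ω) mΩ (m.prod mΩ) μ _ _ hf hdiag

theorem lintegral_condExpKernel_ae_eq_condLExp [StandardBorelSpace Ω] (hm : m ≤ mΩ)
    {F : Ω → ℝ≥0∞} (hF : Measurable F) :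
    (fun ω => ∫⁻ y, F y ∂condExpKernel μ m ω) =ᵐ[μ] μ⁻[F|m] :=
  ae_eq_condLExp hm μ F hF.lintegral_kernel fun _ hs =>
    setLIntegral_lintegral_condExpKernel hm hF hs

theorem condLExp_liminf_le [StandardBorelSpace Ω] (hm : m ≤ mΩ) {F : ℕ → Ω → ℝ≥0∞}
    (hF : ∀ n, Measurable (F n)) :
    μ⁻[fun ω => liminf (F · ω) atTop|m] ≤ᵐ[μ] fun ω => liminf (fun n => μ⁻[F n|m] ω) atTop := by
  filter_upwards [lintegral_condExpKernel_ae_eq_condLExp hm (Measurable.liminf hF),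
    ae_all_iff.2 fun n => lintegral_condExpKernel_ae_eq_condLExp (μ := μ) hm (hF n)] with ω hω hωn
  rw [← hω]
  simp_rw [← hωn]
  exact lintegral_liminf_le hF

end CondLExp

section RightContinuous

variable {Ω : Type*} {mΩ : MeasurableSpace Ω} {V : ℝ → Ω → ℝ}

lemma tendsto_ceil_mul_div_nhdsGE (t : ℝ) :
    Tendsto (fun n : ℕ => (⌈t * (n + 1)⌉ : ℝ) / (n + 1)) atTop (𝓝[≥] t) := by
  have hge : ∀ n : ℕ, t ≤ (⌈t * (n + 1)⌉ : ℝ) / (n + 1) := fun n => by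
    rw [le_div_iff₀ (by positivity)]
    exact Int.le_ceil _
  have hle : ∀ n : ℕ, (⌈t * (n + 1)⌉ : ℝ) / (n + 1) ≤ t + 1 / (n + 1) := fun n => by
    rw [div_le_iff₀ (by positivity), add_mul, one_div_mul_cancel (by positivity)]
    exact (Int.ceil_lt_add_one _).le
  refine tendsto_nhdsWithin_of_tendsto_nhds_of_eventually_within _ ?_ (.of_forall hge)
  refine tendsto_of_tendsto_of_tendsto_of_le_of_le tendsto_const_nhds ?_ hge hle
  simpa using tendsto_const_nhds.add (tendsto_one_div_add_atTop_nhds_zero_nat (𝕜 := ℝ))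

lemma measurable_uncurry_of_continuousWithinAt_Ici (hmeas : ∀ t, Measurable (V t))
    (hrc : ∀ ω t, ContinuousWithinAt (fun r => V r ω) (Ici t) t) :
    Measurable (Function.uncurry V) := by
  have happrox : ∀ n : ℕ,
      Measurable fun p : ℝ × Ω => V ((⌈p.1 * (n + 1)⌉ : ℝ) / (n + 1)) p.2 := fun n =>
    (measurable_from_prod_countable_left (f := fun q : Ω × ℤ => V ((q.2 : ℝ) / (n + 1)) q.1)
      fun k => hmeas ((k : ℝ) / (n + 1))).comp
      (measurable_snd.prodMk (Int.measurable_ceil.comp (measurable_fst.mul_const _)))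
  exact measurable_of_tendsto_metrizable' atTop happrox <| tendsto_pi_nhds.mpr fun p =>
    (hrc p.2 p.1).tendsto.comp (tendsto_ceil_mul_div_nhdsGE p.1)

lemma llim_eq_of_tendsto {t l : ℝ} {ω : Ω} (ht : 0 < t)
    (h : Tendsto (fun r => V r ω) (𝓝[<] t) (𝓝 l)) : llim V t ω = l := by
  rw [llim, if_neg ht.not_ge]
  exact h.limUnder_eq

lemma IsRCLL.measurable_llim_comp (hV : IsRCLL V) (hmeas : ∀ t, Measurable (V t)) {R : Ω → ℝ}
    (hR : Measurable R) : Measurable fun ω => llim V (R ω) ω := by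
  have happrox : ∀ n : ℕ, Measurable fun ω =>
      if R ω ≤ 0 then V 0 ω else V (R ω - 1 / (n + 1)) ω := fun n =>
    Measurable.ite (hR measurableSet_Iic) (hmeas 0)
      ((measurable_uncurry_of_continuousWithinAt_Ici hmeas hV.rightCont).comp
        ((hR.sub_const _).prodMk measurable_id))
  refine measurable_of_tendsto_metrizable' atTop happrox (tendsto_pi_nhds.mpr fun ω => ?_)
  by_cases hR0 : R ω ≤ 0
  · simp only [hR0, if_true, llim]
    exact tendsto_const_nhds
  · push Not at hR0
    obtain ⟨l, hl⟩ := hV.leftLimExists ω (R ω) hR0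
    simp only [hR0.not_ge, if_false, llim_eq_of_tendsto hR0 hl]
    refine hl.comp (tendsto_nhdsWithin_of_tendsto_nhds_of_eventually_within _ ?_
      (.of_forall fun n => ?_))
    · simpa using tendsto_const_nhds.sub (tendsto_one_div_add_atTop_nhds_zero_nat (𝕜 := ℝ))
    · simp only [mem_Iio, sub_lt_self_iff]
      positivity

end RightContinuous

lemma MeasureTheory.IsStoppingTime.indicator_condLExp_min_const_ae_eq {Ω ι : Type*}
    {mΩ : MeasurableSpace Ω} {μ : Measure Ω} [IsFiniteMeasure μ] [LinearOrder ι]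
    {ℱ : Filtration ι mΩ} {τ : Ω → WithTop ι} (hτ : IsStoppingTime ℱ τ) (i : ι)
    (F : Ω → ℝ≥0∞) :
    {ω | τ ω ≤ i}.indicator μ⁻[F|(hτ.min_const i).measurableSpace] =ᵐ[μ]
      μ⁻[{ω | τ ω ≤ i}.indicator F|hτ.measurableSpace] :=
  indicator_condLExp_ae_eq_condLExp_indicator hτ.measurableSpace_le
    (hτ.min_const i).measurableSpace_le (hτ.measurableSet_le' i) (fun t => by
      rw [inter_comm, hτ.measurableSet_inter_le_const_iff]) F

lemma MeasureTheory.IsStoppingTime.measurable_of_coe {Ω : Type*} {mΩ : MeasurableSpace Ω}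
    {ℱ : Filtration ℝ mΩ} {S : Ω → ℝ} (hS : IsStoppingTime ℱ fun ω => (S ω : WithTop ℝ)) :
    Measurable S :=
  measurable_of_Iic fun c => hS.measurableSpace_le {ω | S ω ≤ c} <| by
    simpa only [WithTop.coe_le_coe] using hS.measurableSet_le' c

section Integrand

variable {Ω : Type*} {mΩ : MeasurableSpace Ω} {V : ℝ → Ω → ℝ}

def bmoIntegrand (V : ℝ → Ω → ℝ) (S T : Ω → ℝ) (ω : Ω) : ℝ≥0∞ :=
  ENNReal.ofReal |V (T ω) ω - llim V (S ω) ω|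

lemma IsRCLL.measurable_bmoIntegrand (hV : IsRCLL V) (hmeas : ∀ t, Measurable (V t))
    {S T : Ω → ℝ} (hS : Measurable S) (hT : Measurable T) :
    Measurable (bmoIntegrand V S T) :=
  ((((measurable_uncurry_of_continuousWithinAt_Ici hmeas hV.rightCont).comp
    (hT.prodMk measurable_id)).sub (hV.measurable_llim_comp hmeas hS)).abs).ennreal_ofReal

lemma bmoIntegrand_le_add_liminf {S T : Ω → ℝ} {u l : ℝ} {c : ℕ → ℝ} {ω : Ω} (hu : 0 < u)
    (hl : Tendsto (fun r => V r ω) (𝓝[<] u) (𝓝 l)) (hST : S ω ≤ T ω)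
    (hc : Tendsto c atTop (𝓝[<] u)) :
    bmoIntegrand V S T ω ≤ bmoIntegrand V (fun ω => max (S ω) u) (fun ω => max (T ω) u) ω +
      liminf (fun n => {ω | S ω ≤ c n}.indicator
        (bmoIntegrand V (fun ω => min (S ω) (c n)) (fun ω => min (T ω) (c n))) ω) atTop := by
  have heventually : ∀ {r}, r < u → ∀ᶠ n in atTop, c n ∈ Ioo r u := fun hr =>
    hc.eventually (Ioo_mem_nhdsLT hr)
  rcases lt_or_ge (S ω) u with hSu | hSu
  · rcases lt_or_ge (T ω) u with hTu | hTu
    · -- `[S, T]` lies left of `u`, and the truncation at `c n` eventually does nothing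
      refine le_add_left (le_of_eq ?_)
      rw [liminf_congr ((heventually hTu).mono fun n hn => ?_), liminf_const]
      rw [indicator_of_mem (show ω ∈ {ω | S ω ≤ c n} from hST.trans hn.1.le)]
      simp only [bmoIntegrand, min_eq_left hn.1.le, min_eq_left (hST.trans hn.1.le)]
    · -- the jump across `u` is split at `V_{u-}`
      have hlim : Tendsto (fun n => {ω | S ω ≤ c n}.indicator
          (bmoIntegrand V (fun ω => min (S ω) (c n)) (fun ω => min (T ω) (c n))) ω) atTop
          (𝓝 (ENNReal.ofReal |l - llim V (S ω) ω|)) := by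
        refine Tendsto.congr' (EventuallyEq.symm ((heventually hSu).mono fun n hn => ?_))
          ((ENNReal.continuous_ofReal.tendsto _).comp
            ((continuous_abs.tendsto _).comp ((hl.comp hc).sub_const _)))
        simp only [Function.comp_apply, indicator_of_mem (show ω ∈ {ω | S ω ≤ c n} from hn.1.le),
          bmoIntegrand, min_eq_left hn.1.le, min_eq_right (hn.2.le.trans hTu)]
      rw [hlim.liminf_eq]
      simp only [bmoIntegrand, max_eq_left hTu, max_eq_right hSu.le, llim_eq_of_tendsto hu hl]
      exact (ENNReal.ofReal_le_ofReal (abs_sub_le _ l _)).trans ENNReal.ofReal_add_le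
  · refine le_self_add.trans_eq' ?_
    simp only [bmoIntegrand, max_eq_left hSu, max_eq_left (hSu.trans hST)]

end Integrand

section Rho

variable {Ω : Type*} {mΩ : MeasurableSpace Ω} [StandardBorelSpace Ω] {μ : Measure Ω}
  [IsFiniteMeasure μ] {ℱ : Filtration ℝ mΩ} {V : ℝ → Ω → ℝ} {S T : Ω → ℝ} {s t : ℝ}

lemma le_bmoRho (hS : IsStoppingTime ℱ fun ω => (S ω : WithTop ℝ))
    (hT : IsStoppingTime ℱ fun ω => (T ω : WithTop ℝ)) (hsS : ∀ ω, s ≤ S ω)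
    (hST : ∀ ω, S ω ≤ T ω) (hTt : ∀ ω, T ω ≤ t) :
    essSup (condE μ hS.measurableSpace fun ω => |V (T ω) ω - llim V (S ω) ω|) μ ≤
      bmoRho μ ℱ V s t :=
  le_iSup_of_le S <| le_iSup_of_le T <| le_iSup_of_le hS <| le_iSup_of_le hT <|
    le_iSup_of_le hsS <| le_iSup_of_le hST <| le_iSup_of_le hTt le_rfl

lemma bmoRho_mono {s' t' : ℝ} (hs : s' ≤ s) (ht : t ≤ t') :
    bmoRho μ ℱ V s t ≤ bmoRho μ ℱ V s' t' :=
  iSup_le fun _ => iSup_le fun _ => iSup_le fun hS => iSup_le fun hT => iSup_le fun hsS =>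
    iSup_le fun hST => iSup_le fun hTt =>
      le_bmoRho hS hT (fun ω => hs.trans (hsS ω)) hST fun ω => (hTt ω).trans ht

lemma condE_ae_eq_condLExp_bmoIntegrand (hAd : Adapted ℱ V) (hV : IsRCLL V)
    (hS : IsStoppingTime ℱ fun ω => (S ω : WithTop ℝ))
    (hT : IsStoppingTime ℱ fun ω => (T ω : WithTop ℝ)) :
    condE μ hS.measurableSpace (fun ω => |V (T ω) ω - llim V (S ω) ω|) =ᵐ[μ]
      μ⁻[bmoIntegrand V S T|hS.measurableSpace] :=
  lintegral_condExpKernel_ae_eq_condLExp hS.measurableSpace_le <|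
    hV.measurable_bmoIntegrand (fun t => (hAd t).mono (ℱ.le t) le_rfl)
      hS.measurable_of_coe hT.measurable_of_coe

lemma ae_condLExp_bmoIntegrand_le_bmoRho (hAd : Adapted ℱ V) (hV : IsRCLL V)
    (hS : IsStoppingTime ℱ fun ω => (S ω : WithTop ℝ))
    (hT : IsStoppingTime ℱ fun ω => (T ω : WithTop ℝ)) (hsS : ∀ ω, s ≤ S ω)
    (hST : ∀ ω, S ω ≤ T ω) (hTt : ∀ ω, T ω ≤ t) :
    μ⁻[bmoIntegrand V S T|hS.measurableSpace] ≤ᵐ[μ] fun _ => bmoRho μ ℱ V s t :=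
  (condE_ae_eq_condLExp_bmoIntegrand hAd hV hS hT).symm.trans_le <|
    (ENNReal.ae_le_essSup _).mono fun _ h => h.trans (le_bmoRho hS hT hsS hST hTt)

lemma bmoRho_le_of_forall_ae_condLExp_le (hAd : Adapted ℱ V) (hV : IsRCLL V) {C : ℝ≥0∞}
    (h : ∀ (S T : Ω → ℝ) (hS : IsStoppingTime ℱ fun ω => (S ω : WithTop ℝ)),
      IsStoppingTime ℱ (fun ω => (T ω : WithTop ℝ)) → (∀ ω, s ≤ S ω) → (∀ ω, S ω ≤ T ω) →
        (∀ ω, T ω ≤ t) → μ⁻[bmoIntegrand V S T|hS.measurableSpace] ≤ᵐ[μ] fun _ => C) :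
    bmoRho μ ℱ V s t ≤ C :=
  iSup_le fun S => iSup_le fun T => iSup_le fun hS => iSup_le fun hT => iSup_le fun hsS =>
    iSup_le fun hST => iSup_le fun hTt => essSup_le_of_ae_le _ <|
      (condE_ae_eq_condLExp_bmoIntegrand hAd hV hS hT).trans_le (h S T hS hT hsS hST hTt)

end Rho

section Subadditive

variable {Ω : Type*} {mΩ : MeasurableSpace Ω} [StandardBorelSpace Ω] {μ : Measure Ω}
  [IsFiniteMeasure μ] {ℱ : Filtration ℝ mΩ} {V : ℝ → Ω → ℝ} {S T : Ω → ℝ} {s u t : ℝ}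

lemma ae_condLExp_bmoIntegrand_max_const_le (hAd : Adapted ℱ V) (hV : IsRCLL V)
    (hS : IsStoppingTime ℱ fun ω => (S ω : WithTop ℝ))
    (hT : IsStoppingTime ℱ fun ω => (T ω : WithTop ℝ)) (hST : ∀ ω, S ω ≤ T ω)
    (hTt : ∀ ω, T ω ≤ t) (hut : u ≤ t) :
    μ⁻[bmoIntegrand V (fun ω => max (S ω) u) (fun ω => max (T ω) u)|hS.measurableSpace]
      ≤ᵐ[μ] fun _ => bmoRho μ ℱ V u t := by
  have hSu : IsStoppingTime ℱ fun ω => ((max (S ω) u : ℝ) : WithTop ℝ) := hS.max_const u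
  have hTu : IsStoppingTime ℱ fun ω => ((max (T ω) u : ℝ) : WithTop ℝ) := hT.max_const u
  have hle : hS.measurableSpace ≤ hSu.measurableSpace :=
    hS.measurableSpace_mono hSu fun ω => WithTop.coe_le_coe.mpr (le_max_left _ _)
  refine (condLExp_condLExp_of_le hle hSu.measurableSpace_le _).symm.trans_le ?_
  refine (condLExp_mono (ae_condLExp_bmoIntegrand_le_bmoRho hAd hV hSu hTu
    (fun _ => le_max_right _ _) (fun ω => max_le_max (hST ω) le_rfl)
    fun ω => max_le (hTt ω) hut)).trans_eq ?_
  rw [condLExp_const hS.measurableSpace_le]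

lemma ae_condLExp_indicator_bmoIntegrand_min_const_le (hAd : Adapted ℱ V) (hV : IsRCLL V)
    (hS : IsStoppingTime ℱ fun ω => (S ω : WithTop ℝ))
    (hT : IsStoppingTime ℱ fun ω => (T ω : WithTop ℝ)) (hsS : ∀ ω, s ≤ S ω)
    (hST : ∀ ω, S ω ≤ T ω) {c : ℝ} (hsc : s ≤ c) (hcu : c ≤ u) :
    μ⁻[{ω | S ω ≤ c}.indicator
        (bmoIntegrand V (fun ω => min (S ω) c) (fun ω => min (T ω) c))|hS.measurableSpace]
      ≤ᵐ[μ] fun _ => bmoRho μ ℱ V s u := by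
  have hSc : IsStoppingTime ℱ fun ω => ((min (S ω) c : ℝ) : WithTop ℝ) := hS.min_const c
  have hTc : IsStoppingTime ℱ fun ω => ((min (T ω) c : ℝ) : WithTop ℝ) := hT.min_const c
  have hset : {ω | S ω ≤ c} = {ω | (S ω : WithTop ℝ) ≤ c} := by simp
  rw [hset]
  refine (hS.indicator_condLExp_min_const_ae_eq c _).symm.trans_le ?_
  filter_upwards [ae_condLExp_bmoIntegrand_le_bmoRho (μ := μ) hAd hV hSc hTc
    (fun ω => le_min (hsS ω) hsc) (fun ω => min_le_min (hST ω) le_rfl)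
    fun ω => (min_le_right _ _).trans hcu] with ω hω
  exact (indicator_le_self _ _ ω).trans hω

theorem bmoRho_le_add (hAd : Adapted ℱ V) (hV : IsRCLL V) (hs : 0 ≤ s) (hsu : s ≤ u)
    (hut : u ≤ t) : bmoRho μ ℱ V s t ≤ bmoRho μ ℱ V s u + bmoRho μ ℱ V u t := by
  rcases hsu.eq_or_lt with rfl | hsu
  · exact le_add_self
  obtain ⟨c, -, hc_mem, hc⟩ := exists_seq_strictMono_tendsto' hsu
  have hc' : Tendsto c atTop (𝓝[<] u) :=
    tendsto_nhdsWithin_of_tendsto_nhds_of_eventually_within _ hc (.of_forall fun n => (hc_mem n).2)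
  have hu : 0 < u := hs.trans_lt hsu
  refine bmoRho_le_of_forall_ae_condLExp_le hAd hV fun S T hS hT hsS hST hTt => ?_
  have hmeas : ∀ r, Measurable (V r) := fun r => (hAd r).mono (ℱ.le r) le_rfl
  set L : ℕ → Ω → ℝ≥0∞ := fun n => {ω | S ω ≤ c n}.indicator
    (bmoIntegrand V (fun ω => min (S ω) (c n)) (fun ω => min (T ω) (c n)))
  have hL : ∀ n, Measurable (L n) := fun n =>
    (hV.measurable_bmoIntegrand hmeas (hS.measurable_of_coe.min measurable_const)
      (hT.measurable_of_coe.min measurable_const)).indicator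
      (measurableSet_le hS.measurable_of_coe measurable_const)
  have hG : Measurable (bmoIntegrand V (fun ω => max (S ω) u) (fun ω => max (T ω) u)) :=
    hV.measurable_bmoIntegrand hmeas (hS.measurable_of_coe.max measurable_const)
      (hT.measurable_of_coe.max measurable_const)
  have hsplit : bmoIntegrand V S T ≤
      bmoIntegrand V (fun ω => max (S ω) u) (fun ω => max (T ω) u) +
        fun ω => liminf (L · ω) atTop := fun ω =>
    have ⟨l, hl⟩ := hV.leftLimExists ω u hu
    bmoIntegrand_le_add_liminf hu hl (hST ω) hc'
  filter_upwards [condLExp_mono (ae_of_all μ hsplit),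
    condLExp_add_left _ hG.aemeasurable,
    ae_condLExp_bmoIntegrand_max_const_le hAd hV hS hT hST hTt hut,
    condLExp_liminf_le hS.measurableSpace_le hL,
    ae_all_iff.2 fun n => ae_condLExp_indicator_bmoIntegrand_min_const_le hAd hV hS hT hsS hST
      (hc_mem n).1.le (hc_mem n).2.le] with ω hsplitω hadd hright hfatou hleft
  calc μ⁻[bmoIntegrand V S T|hS.measurableSpace] ω
      ≤ μ⁻[bmoIntegrand V (fun ω => max (S ω) u) (fun ω => max (T ω) u)|hS.measurableSpace] ω +
        μ⁻[fun ω => liminf (L · ω) atTop|hS.measurableSpace] ω := hsplitω.trans_eq hadd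
    _ ≤ bmoRho μ ℱ V u t + liminf (fun n => μ⁻[L n|hS.measurableSpace] ω) atTop :=
        add_le_add hright hfatou
    _ ≤ bmoRho μ ℱ V u t + bmoRho μ ℱ V s u :=
        add_le_add le_rfl ((liminf_le_liminf (.of_forall hleft)).trans_eq (liminf_const _))
    _ = bmoRho μ ℱ V s u + bmoRho μ ℱ V u t := add_comm _ _

end Subadditive

section Continuity

variable {Ω : Type*} {mΩ : MeasurableSpace Ω} [StandardBorelSpace Ω] {μ : Measure Ω}
  [IsFiniteMeasure μ] {ℱ : Filtration ℝ mΩ} {V : ℝ → Ω → ℝ} {τ : ℝ}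

lemma exists_bmoRho_le_of_bmoKappa_eq_zero (hκ : bmoKappa μ ℱ V 0 τ = 0) {ε : ℝ≥0∞}
    (hε : 0 < ε) : ∃ h > 0, ∀ u v : ℝ, 0 ≤ u → u ≤ v → v ≤ τ → v - u ≤ h →
      bmoRho μ ℱ V u v ≤ ε := by
  rw [← hκ, bmoKappa] at hε
  obtain ⟨h, hh⟩ := iInf_lt_iff.mp hε
  obtain ⟨hpos, hlt⟩ := iInf_lt_iff.mp hh
  refine ⟨h, hpos, fun u v hu huv hv hvu => le_trans ?_ hlt.le⟩
  exact le_iSup_of_le u <| le_iSup_of_le v <| le_iSup_of_le hu <| le_iSup_of_le huv <|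
    le_iSup_of_le hv <| le_iSup_of_le hvu le_rfl

lemma bmoRho_le_add_of_abs_sub_le (hAd : Adapted ℱ V) (hV : IsRCLL V) {h : ℝ} {ε : ℝ≥0∞}
    (hsmall : ∀ u v : ℝ, 0 ≤ u → u ≤ v → v ≤ τ → v - u ≤ h → bmoRho μ ℱ V u v ≤ ε)
    {s t s' t' : ℝ} (hst : s ≤ t) (hs' : 0 ≤ s') (hst' : s' ≤ t') (ht' : t' ≤ τ)
    (hs : |s' - s| ≤ h) (ht : |t' - t| ≤ h) :
    bmoRho μ ℱ V s' t' ≤ bmoRho μ ℱ V s t + (ε + ε) := by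
  obtain ⟨hs₁, hs₂⟩ := abs_le.mp hs
  obtain ⟨ht₁, ht₂⟩ := abs_le.mp ht
  have hh : 0 ≤ h := (abs_nonneg _).trans hs
  set a := max s s'
  set b := min t t'
  rcases le_or_gt a b with hab | hba
  · have hs'a : s' ≤ a := le_max_right _ _
    have hbt' : b ≤ t' := min_le_right _ _
    have ha : a ≤ s' + h := max_le (by linarith) (by linarith)
    have hb : t' - h ≤ b := le_min (by linarith) (by linarith)
    calc bmoRho μ ℱ V s' t'
        ≤ bmoRho μ ℱ V s' a + (bmoRho μ ℱ V a b + bmoRho μ ℱ V b t') :=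
          (bmoRho_le_add hAd hV hs' hs'a (hab.trans hbt')).trans
            (add_le_add le_rfl (bmoRho_le_add hAd hV (hs'.trans hs'a) hab hbt'))
      _ ≤ ε + (bmoRho μ ℱ V s t + ε) := by
          gcongr
          · exact hsmall s' a hs' hs'a ((hab.trans hbt').trans ht') (by linarith)
          · exact bmoRho_mono (le_max_left _ _) (min_le_left _ _)
          · exact hsmall b t' ((hs'.trans hs'a).trans hab) hbt' ht' (by linarith)
      _ = bmoRho μ ℱ V s t + (ε + ε) := by ring
  · have hshort : t' - s' ≤ h := by
      rcases min_lt_iff.mp hba with hb | hb <;> rcases lt_max_iff.mp hb with ha | ha <;> linarith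
    exact (hsmall s' t' hs' hst' ht' hshort).trans (le_add_self.trans le_add_self)

lemma eventually_bmoRho_le_add (hAd : Adapted ℱ V) (hV : IsRCLL V)
    (hκ : bmoKappa μ ℱ V 0 τ = 0) {x : ℝ × ℝ} (hx : 0 ≤ x.1 ∧ x.1 ≤ x.2 ∧ x.2 ≤ τ)
    {ε : ℝ≥0∞} (hε : 0 < ε) :
    ∀ᶠ y in 𝓝[{y : ℝ × ℝ | 0 ≤ y.1 ∧ y.1 ≤ y.2 ∧ y.2 ≤ τ}] x,
      bmoRho μ ℱ V y.1 y.2 ≤ bmoRho μ ℱ V x.1 x.2 + ε ∧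
        bmoRho μ ℱ V x.1 x.2 ≤ bmoRho μ ℱ V y.1 y.2 + ε := by
  obtain ⟨h, hh, hsmall⟩ := exists_bmoRho_le_of_bmoKappa_eq_zero hκ (ENNReal.half_pos hε.ne')
  filter_upwards [self_mem_nhdsWithin, nhdsWithin_le_nhds (Metric.closedBall_mem_nhds x hh)]
    with y ⟨hy₁, hy₂, hy₃⟩ hyx
  rw [Metric.mem_closedBall, Prod.dist_eq, max_le_iff, Real.dist_eq, Real.dist_eq] at hyx
  rw [← ENNReal.add_halves ε]
  exact ⟨bmoRho_le_add_of_abs_sub_le hAd hV hsmall hx.2.1 hy₁ hy₂ hy₃ hyx.1 hyx.2,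
    bmoRho_le_add_of_abs_sub_le hAd hV hsmall hy₂ hx.1 hx.2.1 hx.2.2
      (by rw [abs_sub_comm]; exact hyx.1) (by rw [abs_sub_comm]; exact hyx.2)⟩

lemma IsBMO.continuousOn_bmoRho (hV : IsBMO μ ℱ τ V) (hκ : bmoKappa μ ℱ V 0 τ = 0) :
    ContinuousOn (fun x : ℝ × ℝ => bmoRho μ ℱ V x.1 x.2)
      {x : ℝ × ℝ | 0 ≤ x.1 ∧ x.1 ≤ x.2 ∧ x.2 ≤ τ} := fun x hx => by
  have hfin : bmoRho μ ℱ V x.1 x.2 ≠ ⊤ := ((bmoRho_mono hx.1 hx.2.2).trans_lt hV.finite).ne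
  refine (ENNReal.tendsto_nhds hfin).2 fun ε hε => ?_
  filter_upwards [eventually_bmoRho_le_add hV.adapted hV.rcll hκ hx hε] with y hy
  exact ⟨tsub_le_iff_right.2 hy.2, hy.1⟩

end Continuity

theorem rho_subadditive_and_continuous_general {Ω : Type*} {mΩ : MeasurableSpace Ω}
    [StandardBorelSpace Ω]
    (μ : Measure Ω) [IsProbabilityMeasure μ] (ℱ : Filtration ℝ mΩ)
    (τ : ℝ) (V : ℝ → Ω → ℝ) (hV : IsBMO μ ℱ τ V) :
    (∀ s u t : ℝ, 0 ≤ s → s ≤ u → u ≤ t → t ≤ τ →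
      bmoRho μ ℱ V s t ≤ bmoRho μ ℱ V s u + bmoRho μ ℱ V u t) ∧
    (bmoKappa μ ℱ V 0 τ = 0 →
      ContinuousOn (fun x : ℝ × ℝ => bmoRho μ ℱ V x.1 x.2)
        {x : ℝ × ℝ | 0 ≤ x.1 ∧ x.1 ≤ x.2 ∧ x.2 ≤ τ}) :=
  ⟨fun _ _ _ hs hsu hut _ => bmoRho_le_add hV.adapted hV.rcll hs hsu hut, hV.continuousOn_bmoRho⟩

/-- the modulus of mean oscillation `ρ(V)` of a BMO process is subadditive;
moreover, if `V` is VMO (`κ_{0,τ}(V) = 0`) then `(s,t) ↦ ρ_{s,t}(V)` is continuous on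
the triangle `{(s,t) : 0 ≤ s ≤ t ≤ τ}`. -/
theorem rho_subadditive_and_continuous {Ω : Type*} {mΩ : MeasurableSpace Ω}
    [StandardBorelSpace Ω]
    (μ : Measure Ω) [IsProbabilityMeasure μ] (ℱ : Filtration ℝ mΩ)
    (τ : ℝ) (hτ : 0 < τ) (V : ℝ → Ω → ℝ) (hV : IsBMO μ ℱ τ V) :
    (∀ s u t : ℝ, 0 ≤ s → s ≤ u → u ≤ t → t ≤ τ →
      bmoRho μ ℱ V s t ≤ bmoRho μ ℱ V s u + bmoRho μ ℱ V u t) ∧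
    (bmoKappa μ ℱ V 0 τ = 0 →
      ContinuousOn (fun x : ℝ × ℝ => bmoRho μ ℱ V x.1 x.2)
        {x : ℝ × ℝ | 0 ≤ x.1 ∧ x.1 ≤ x.2 ∧ x.2 ≤ τ}) :=
  rho_subadditive_and_continuous_general μ ℱ τ V hV

end
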